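/- Let α > 0 and β ∈ ℂ with β ≠ 0, and let 𝔛, Λ, ΛH, K_𝔛, K^{≥0}_𝔛 and π^H be as in the ℓ¹-model of the loop algebra. Then the restriction of π^H to K^{≥0}_𝔛 is a bijective continuous ℝ-linear map from K^{≥0}_𝔛 onto ΛH ∩ K_𝔛; in particular it is an isomorphism of real Banach spaces. -/

import Mathlib

open Complex ComplexConjugate Matrix

noncomputable section

attribute [local instance] Matrix.normedAddCommGroup

/-- Membership in the ℓ¹-model `Λ` of the Wiener loop algebra `Λsl(2,ℂ)`:
absolutely summable coefficients, all traceless. -/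
def memL (ξ : ℤ → Matrix (Fin 2) (Fin 2) ℂ) : Prop :=
  Summable (fun k => ‖ξ k‖) ∧ ∀ k, (ξ k).trace = 0

/-- The coefficientwise involution `(ξ*)_k = −(−1)^k·(ξ_{−k})ᴴ`. -/
def starSeq (ξ : ℤ → Matrix (Fin 2) (Fin 2) ℂ) : ℤ → Matrix (Fin 2) (Fin 2) ℂ :=
  fun k => -((-1 : ℂ) ^ k • (ξ (-k))ᴴ)

/-- The projection `π^H(ξ) = ½(ξ − ξ*)` onto the Hermitian-symmetric part. -/
def piH (ξ : ℤ → Matrix (Fin 2) (Fin 2) ℂ) : ℤ → Matrix (Fin 2) (Fin 2) ℂ :=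
  fun k => (1 / 2 : ℂ) • (ξ k - starSeq ξ k)

/-- The loop `𝔛` with coefficients `𝔛₋₁ = β·E₁₂`, `𝔛₀ = diag(μ,−μ)` (`μ = i√(α²+|β|²)`),
`𝔛₁ = conj(β)·E₂₁`, and `𝔛_k = 0` otherwise. -/
def XX (α : ℝ) (β : ℂ) : ℤ → Matrix (Fin 2) (Fin 2) ℂ := fun k =>
  if k = -1 then β • !![0, 1; 0, 0]
  else if k = 0 then
    !![Complex.I * ((Real.sqrt (α ^ 2 + Complex.normSq β) : ℝ) : ℂ), 0;
       0, -(Complex.I * ((Real.sqrt (α ^ 2 + Complex.normSq β) : ℝ) : ℂ))]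
  else if k = 1 then (conj β) • !![0, 0; 1, 0]
  else 0

/-- The condition `tr(𝔛ξ) = 0`, coefficient by coefficient. -/
def Kcond (α : ℝ) (β : ℂ) (ξ : ℤ → Matrix (Fin 2) (Fin 2) ℂ) : Prop :=
  ∀ k : ℤ, (XX α β (-1) * ξ (k + 1)).trace + (XX α β 0 * ξ k).trace
      + (XX α β 1 * ξ (k - 1)).trace = 0

/-!
An element `ξ` of `K^{≥0}_𝔛` is recovered from `H = π^H ξ`: `ξ_k = 2 H_k` for `k > 0`, and `ξ_0` is
upper triangular (the condition `tr(𝔛ξ) = 0` at `k = -1` kills `ξ_0 10` since `β ≠ 0`) with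
off-diagonal entry `2 H_0 01` and, by the condition at `k = 0` and tracelessness, diagonal
`± iβ H_1 10 / |μ|`. These formulas define an inverse `piHInv`, visibly bounded in `ℓ¹`. Conversely,
for `H ∈ ΛH ∩ K_𝔛` the condition at `k = 0` says that the real part of `iβ H_1 10 / |μ|` is `H_0 00`,
which is what makes `π^H ∘ piHInv` the identity there.
-/

attribute [local instance] Matrix.normedSpace

lemma Matrix.ext_fin_two {R : Type*} {A B : Matrix (Fin 2) (Fin 2) R} (h₀₀ : A 0 0 = B 0 0)
    (h₀₁ : A 0 1 = B 0 1) (h₁₀ : A 1 0 = B 1 0) (h₁₁ : A 1 1 = B 1 1) : A = B := by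
  ext i j
  fin_cases i <;> fin_cases j <;> assumption

abbrev Loop := ℤ → Matrix (Fin 2) (Fin 2) ℂ

section Summation

variable {ι : Type*} [DecidableEq ι] {f g : ι → ℝ} {i : ι} {c : ℝ}

lemma summable_of_le_add_single (hf : ∀ k, 0 ≤ f k) (hg : Summable g)
    (h : ∀ k, f k ≤ g k + (Pi.single i c : ι → ℝ) k) : Summable f :=
  .of_nonneg_of_le hf h (hg.add (hasSum_pi_single i c).summable)

lemma tsum_le_add_of_le_add_single (hf : ∀ k, 0 ≤ f k) (hg : Summable g)
    (h : ∀ k, f k ≤ g k + (Pi.single i c : ι → ℝ) k) : ∑' k, f k ≤ ∑' k, g k + c := by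
  have hs : Summable (Pi.single i c : ι → ℝ) := (hasSum_pi_single i c).summable
  calc ∑' k, f k ≤ ∑' k, (g k + (Pi.single i c : ι → ℝ) k) :=
        (summable_of_le_add_single hf hg h).tsum_le_tsum h (hg.add hs)
    _ = ∑' k, g k + c := by rw [hg.tsum_add hs, tsum_pi_single]

end Summation

def absMu (α : ℝ) (β : ℂ) : ℝ := Real.sqrt (α ^ 2 + normSq β)

lemma absMu_nonneg (α : ℝ) (β : ℂ) : 0 ≤ absMu α β := Real.sqrt_nonneg _

lemma absMu_pos (α : ℝ) {β : ℂ} (hβ : β ≠ 0) : 0 < absMu α β :=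
  Real.sqrt_pos.mpr (by have := normSq_pos.mpr hβ; positivity)

lemma ofReal_absMu_ne_zero (α : ℝ) {β : ℂ} (hβ : β ≠ 0) : (absMu α β : ℂ) ≠ 0 :=
  ofReal_ne_zero.mpr (absMu_pos α hβ).ne'

lemma trace_XX_neg_one_mul (α : ℝ) (β : ℂ) (A : Matrix (Fin 2) (Fin 2) ℂ) :
    (XX α β (-1) * A).trace = β * A 1 0 := by
  simp [XX, Matrix.trace_fin_two, Matrix.vecMul, dotProduct, Fin.sum_univ_two]

lemma trace_XX_zero_mul (α : ℝ) (β : ℂ) (A : Matrix (Fin 2) (Fin 2) ℂ) :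
    (XX α β 0 * A).trace = I * absMu α β * (A 0 0 - A 1 1) := by
  simp [XX, absMu, Matrix.trace_fin_two, Matrix.vecMul, dotProduct, Fin.sum_univ_two, mul_sub,
    ← sub_eq_add_neg]

lemma trace_XX_one_mul (α : ℝ) (β : ℂ) (A : Matrix (Fin 2) (Fin 2) ℂ) :
    (XX α β 1 * A).trace = conj β * A 0 1 := by
  simp [XX, Matrix.trace_fin_two, Matrix.vecMul, dotProduct, Fin.sum_univ_two]

lemma kcond_iff {α : ℝ} {β : ℂ} {ξ : Loop} :
    Kcond α β ξ ↔ ∀ k : ℤ,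
      β * ξ (k + 1) 1 0 + I * absMu α β * (ξ k 0 0 - ξ k 1 1) + conj β * ξ (k - 1) 0 1 = 0 := by
  simp only [Kcond, trace_XX_neg_one_mul, trace_XX_zero_mul, trace_XX_one_mul]

lemma starSeq_apply (ξ : Loop) (k : ℤ) (i j : Fin 2) :
    starSeq ξ k i j = -((-1 : ℂ) ^ k * conj (ξ (-k) j i)) := by
  simp [starSeq]

lemma piH_apply (ξ : Loop) (k : ℤ) (i j : Fin 2) :
    piH ξ k i j = (ξ k i j + (-1 : ℂ) ^ k * conj (ξ (-k) j i)) / 2 := by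
  simp only [piH, Matrix.smul_apply, Matrix.sub_apply, starSeq_apply, sub_neg_eq_add, smul_eq_mul]
  ring

lemma piH_zero_apply (ξ : Loop) (i j : Fin 2) : piH ξ 0 i j = (ξ 0 i j + conj (ξ 0 j i)) / 2 := by
  simp [piH_apply]

lemma piH_apply_of_pos {ξ : Loop} (hs : ∀ k < 0, ξ k = 0) {k : ℤ} (hk : 0 < k) (i j : Fin 2) :
    piH ξ k i j = ξ k i j / 2 := by
  simp [piH_apply, hs (-k) (by omega)]

lemma piH_add (ξ ζ : Loop) : piH (ξ + ζ) = piH ξ + piH ζ := by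
  funext k; ext i j
  simp only [Pi.add_apply, piH_apply, Matrix.add_apply, map_add]
  ring

lemma piH_ofReal_smul (r : ℝ) (ξ : Loop) :
    piH (fun k => (r : ℂ) • ξ k) = fun k => (r : ℂ) • piH ξ k := by
  funext k; ext i j
  simp only [piH_apply, Matrix.smul_apply, smul_eq_mul, map_mul, conj_ofReal]
  ring

lemma norm_starSeq (ξ : Loop) (k : ℤ) : ‖starSeq ξ k‖ = ‖ξ (-k)‖ := by
  simp [starSeq, norm_smul, Matrix.norm_conjTranspose]

lemma norm_piH_le (ξ : Loop) (k : ℤ) : ‖piH ξ k‖ ≤ ‖ξ k‖ / 2 + ‖ξ (-k)‖ / 2 := by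
  calc ‖piH ξ k‖ = ‖ξ k - starSeq ξ k‖ / 2 := by
        rw [piH, norm_smul, norm_div, norm_one, RCLike.norm_ofNat]; ring
    _ ≤ (‖ξ k‖ + ‖starSeq ξ k‖) / 2 := by gcongr; exact norm_sub_le _ _
    _ = ‖ξ k‖ / 2 + ‖ξ (-k)‖ / 2 := by rw [norm_starSeq]; ring

lemma summable_norm_piH {ξ : Loop} (hξ : Summable fun k => ‖ξ k‖) :
    Summable fun k => ‖piH ξ k‖ :=
  .of_nonneg_of_le (fun _ => norm_nonneg _) (norm_piH_le ξ)
    ((hξ.div_const 2).add ((hξ.comp_injective neg_injective).div_const 2))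

lemma tsum_norm_piH_le {ξ : Loop} (hξ : Summable fun k => ‖ξ k‖) :
    ∑' k, ‖piH ξ k‖ ≤ ∑' k, ‖ξ k‖ := by
  have h₁ := hξ.div_const 2
  have h₂ : Summable fun k => ‖ξ (-k)‖ / 2 := (hξ.comp_injective neg_injective).div_const 2
  calc ∑' k, ‖piH ξ k‖ ≤ ∑' k, (‖ξ k‖ / 2 + ‖ξ (-k)‖ / 2) :=
        (summable_norm_piH hξ).tsum_le_tsum (norm_piH_le ξ) (h₁.add h₂)
    _ = ∑' k, ‖ξ k‖ := by
        rw [h₁.tsum_add h₂, tsum_div_const, tsum_div_const, tsum_comp_neg (fun k => ‖ξ k‖)]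
        ring

lemma memL_piH {ξ : Loop} (h : memL ξ) : memL (piH ξ) := by
  refine ⟨summable_norm_piH h.1, fun k => ?_⟩
  simp [piH, starSeq, Matrix.trace_smul, Matrix.trace_conjTranspose, h.2 k, h.2 (-k)]

lemma starSeq_piH (ξ : Loop) (k : ℤ) : starSeq (piH ξ) k = -piH ξ k := by
  have h : (-1 : ℂ) ^ k * (-1) ^ (-k) = 1 := by
    rw [← zpow_add₀ (by norm_num), add_neg_cancel, zpow_zero]
  ext i j
  simp only [Matrix.neg_apply, starSeq_apply, piH_apply, neg_neg, map_div₀, map_add, map_mul,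
    conj_conj, map_zpow₀, map_neg, map_one, map_ofNat]
  linear_combination (-ξ k i j / 2) * h

lemma kcond_starSeq {α : ℝ} {β : ℂ} {ξ : Loop} (h : Kcond α β ξ) : Kcond α β (starSeq ξ) := by
  rw [kcond_iff] at h ⊢
  intro k
  have hk := congrArg conj (h (-k))
  simp only [map_add, map_mul, map_sub, map_zero, conj_I, conj_ofReal, conj_conj] at hk
  rw [starSeq_apply, starSeq_apply, starSeq_apply, starSeq_apply, show -(k + 1) = -k - 1 by ring,
    show -(k - 1) = -k + 1 by ring, zpow_add₀ (by norm_num), zpow_sub₀ (by norm_num), zpow_one]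
  field_simp
  linear_combination (-1 : ℂ) ^ k * hk

lemma kcond_piH {α : ℝ} {β : ℂ} {ξ : Loop} (h : Kcond α β ξ) : Kcond α β (piH ξ) := by
  have h₁ := kcond_iff.mp h
  have h₂ := kcond_iff.mp (kcond_starSeq h)
  rw [kcond_iff]
  intro k
  simp only [piH, Matrix.smul_apply, Matrix.sub_apply, smul_eq_mul]
  linear_combination (1 / 2 : ℂ) * (h₁ k - h₂ k)

def piHInvDiag (α : ℝ) (β : ℂ) (H : Loop) : ℂ := I * β * H 1 1 0 / absMu α β

def piHInv (α : ℝ) (β : ℂ) (H : Loop) : Loop := fun k =>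
  if k < 0 then 0
  else if k = 0 then !![piHInvDiag α β H, 2 * H 0 0 1; 0, -piHInvDiag α β H]
  else (2 : ℂ) • H k

section piHInv

variable {α : ℝ} {β : ℂ} {H : Loop}

lemma piHInv_of_neg {k : ℤ} (hk : k < 0) : piHInv α β H k = 0 := by
  simp [piHInv, hk]

lemma piHInv_zero :
    piHInv α β H 0 = !![piHInvDiag α β H, 2 * H 0 0 1; 0, -piHInvDiag α β H] := by
  simp [piHInv]

lemma piHInv_of_pos {k : ℤ} (hk : 0 < k) : piHInv α β H k = (2 : ℂ) • H k := by
  simp [piHInv, hk.not_gt, hk.ne']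

lemma norm_piHInvDiag_le : ‖piHInvDiag α β H‖ ≤ ‖β‖ / absMu α β * ‖H 1‖ := by
  have hμ := absMu_nonneg α β
  rw [piHInvDiag, norm_div, norm_mul, norm_mul, norm_I, one_mul, norm_real, Real.norm_of_nonneg hμ,
    div_mul_eq_mul_div]
  gcongr
  exact Matrix.norm_entry_le_entrywise_sup_norm (H 1)

lemma norm_piHInv_le (k : ℤ) :
    ‖piHInv α β H k‖ ≤ 2 * ‖H k‖ + (Pi.single 0 (‖β‖ / absMu α β * ‖H 1‖) : ℤ → ℝ) k := by
  rcases lt_trichotomy k 0 with hk | rfl | hk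
  · simp [piHInv_of_neg hk, hk.ne]
  · have hd := norm_piHInvDiag_le (α := α) (β := β) (H := H)
    have h01 : ‖H 0 0 1‖ ≤ ‖H 0‖ := Matrix.norm_entry_le_entrywise_sup_norm (H 0)
    have h0 := norm_nonneg (H 0)
    have hd0 := (norm_nonneg _).trans hd
    rw [Pi.single_eq_same, piHInv_zero, Matrix.norm_le_iff (by positivity)]
    intro i j
    fin_cases i <;> fin_cases j <;> simp <;> linarith
  · simp [piHInv_of_pos hk, hk.ne', norm_smul]

lemma memL_piHInv (hH : memL H) : memL (piHInv α β H) := by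
  refine ⟨summable_of_le_add_single (fun _ => norm_nonneg _) (hH.1.mul_left 2) norm_piHInv_le,
    fun k => ?_⟩
  rcases lt_trichotomy k 0 with hk | rfl | hk
  · simp [piHInv_of_neg hk]
  · simp [piHInv_zero, Matrix.trace_fin_two]
  · simp [piHInv_of_pos hk, hH.2 k]

lemma tsum_norm_piHInv_le (hH : Summable fun k => ‖H k‖) :
    ∑' k, ‖piHInv α β H k‖ ≤ (2 + ‖β‖ / absMu α β) * ∑' k, ‖H k‖ := by
  have hH1 : ‖H 1‖ ≤ ∑' k, ‖H k‖ := hH.le_tsum 1 (fun _ _ => norm_nonneg _)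
  have hc : 0 ≤ ‖β‖ / absMu α β := div_nonneg (norm_nonneg _) (absMu_nonneg α β)
  calc ∑' k, ‖piHInv α β H k‖ ≤ ∑' k, 2 * ‖H k‖ + ‖β‖ / absMu α β * ‖H 1‖ :=
        tsum_le_add_of_le_add_single (fun _ => norm_nonneg _) (hH.mul_left 2) norm_piHInv_le
    _ ≤ (2 + ‖β‖ / absMu α β) * ∑' k, ‖H k‖ := by
        rw [tsum_mul_left]; nlinarith

lemma piHInv_apply_zero_one {k : ℤ} (hk : 0 ≤ k) : piHInv α β H k 0 1 = 2 * H k 0 1 := by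
  rcases hk.eq_or_lt with rfl | hk
  · simp [piHInv_zero]
  · simp [piHInv_of_pos hk]

lemma kcond_piHInv (hβ : β ≠ 0) (hK : Kcond α β H) : Kcond α β (piHInv α β H) := by
  rw [kcond_iff] at hK ⊢
  intro k
  obtain hk | rfl | rfl | hk : k < -1 ∨ k = -1 ∨ k = 0 ∨ 0 < k := by omega
  · simp [piHInv_of_neg (show k + 1 < 0 by omega), piHInv_of_neg (show k < 0 by omega),
      piHInv_of_neg (show k - 1 < 0 by omega)]
  · simp [piHInv_zero, piHInv_of_neg]
  · have hμ := ofReal_absMu_ne_zero α hβ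
    simp only [zero_add, zero_sub, piHInv_of_pos one_pos, piHInv_zero,
      piHInv_of_neg neg_one_lt_zero, piHInvDiag, Matrix.smul_apply, smul_eq_mul, Matrix.zero_apply, of_apply, cons_val',
      cons_val_zero, cons_val_fin_one, cons_val_one, sub_neg_eq_add, mul_zero, add_zero]
    field_simp
    linear_combination (2 * β * H 1 1 0) * I_sq
  · rw [piHInv_of_pos (by omega), piHInv_of_pos hk, piHInv_apply_zero_one (by omega)]
    simp only [Matrix.smul_apply, smul_eq_mul]
    linear_combination 2 * hK k

lemma piHInv_piH (hβ : β ≠ 0) {ξ : Loop} (htr : (ξ 0).trace = 0)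
    (hK : Kcond α β ξ) (hs : ∀ k < 0, ξ k = 0) : piHInv α β (piH ξ) = ξ := by
  have hμ := ofReal_absMu_ne_zero α hβ
  rw [kcond_iff] at hK
  rw [Matrix.trace_fin_two] at htr
  have h10 : ξ 0 1 0 = 0 := by
    simpa [hs (-1) (by norm_num), hs (-2) (by norm_num), hβ] using hK (-1)
  have hdiag : 2 * absMu α β * ξ 0 0 0 = I * β * ξ 1 1 0 := by
    have h0 : β * ξ 1 1 0 + I * absMu α β * (ξ 0 0 0 - ξ 0 1 1) = 0 := by
      simpa [hs (-1) (by norm_num)] using hK 0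
    linear_combination (-I) * h0 + absMu α β * (ξ 0 0 0 - ξ 0 1 1) * I_sq + absMu α β * htr
  funext k
  rcases lt_trichotomy k 0 with hk | rfl | hk
  · rw [piHInv_of_neg hk, hs k hk]
  · refine Matrix.ext_fin_two ?_ ?_ ?_ ?_ <;>
      simp only [piHInv_zero, piHInvDiag, piH_apply_of_pos hs one_pos, piH_zero_apply, h10,
        of_apply, cons_val', cons_val_zero, cons_val_one, cons_val_fin_one, map_zero, add_zero]
    · field_simp
      linear_combination -hdiag
    · ring
    · field_simp
      linear_combination hdiag - 2 * absMu α β * htr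
  · ext i j
    simp only [piHInv_of_pos hk, Matrix.smul_apply, piH_apply_of_pos hs hk, smul_eq_mul]
    ring

lemma piH_piHInv (hβ : β ≠ 0) (htr : (H 0).trace = 0)
    (hH : ∀ k, starSeq H k = -H k) (hK : Kcond α β H) : piH (piHInv α β H) = H := by
  have hμ := ofReal_absMu_ne_zero α hβ
  have hHk (k : ℤ) (i j : Fin 2) : H k i j = (-1) ^ k * conj (H (-k) j i) := by
    simpa [starSeq_apply] using (congrFun (congrFun (hH k) i) j).symm
  rw [Matrix.trace_fin_two] at htr
  have hdiag : piHInvDiag α β H + conj (piHInvDiag α β H) = 2 * H 0 0 0 := by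
    have h0 := kcond_iff.mp hK 0
    rw [zero_add, zero_sub, hHk (-1) 0 1, neg_neg, _root_.zpow_neg_one, _root_.inv_neg, inv_one] at h0
    simp only [piHInvDiag, map_div₀, map_mul, conj_I, conj_ofReal]
    field_simp
    linear_combination I * h0 - absMu α β * (H 0 0 0 - H 0 1 1) * I_sq - absMu α β * htr
  funext k
  rcases lt_trichotomy k 0 with hk | rfl | hk
  · ext i j
    simp only [piH_apply, piHInv_of_neg hk, piHInv_of_pos (neg_pos.mpr hk), hHk k i j,
      Matrix.zero_apply, Matrix.smul_apply, smul_eq_mul, map_mul, map_ofNat, zero_add]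
    ring
  · refine Matrix.ext_fin_two ?_ ?_ ?_ ?_ <;>
      simp only [piH_zero_apply, piHInv_zero, of_apply, cons_val', cons_val_zero, cons_val_one,
        cons_val_fin_one, map_zero, map_neg, map_mul, map_ofNat, add_zero, zero_add]
    · rw [hdiag]; ring
    · ring
    · rw [hHk 0 1 0]; simp
    · linear_combination (-1 / 2 : ℂ) * hdiag - htr
  · ext i j
    simp [piH_apply, piHInv_of_pos hk, piHInv_of_neg (neg_neg_of_pos hk)]

end piHInv

theorem stmt12_general (α : ℝ) (β : ℂ) (hβ : β ≠ 0) :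
    -- π^H maps K^{≥0}_𝔛 into ΛH ∩ K_𝔛
    (∀ ξ, memL ξ → Kcond α β ξ → (∀ k < 0, ξ k = 0) →
      memL (piH ξ) ∧ (∀ k, starSeq (piH ξ) k = -piH ξ k) ∧ Kcond α β (piH ξ)) ∧
    -- injectivity
    (∀ ξ ζ, memL ξ → Kcond α β ξ → (∀ k < 0, ξ k = 0) →
      memL ζ → Kcond α β ζ → (∀ k < 0, ζ k = 0) → piH ξ = piH ζ → ξ = ζ) ∧
    -- surjectivity onto ΛH ∩ K_𝔛
    (∀ H, memL H → (∀ k, starSeq H k = -H k) → Kcond α β H →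
      ∃ ξ, memL ξ ∧ Kcond α β ξ ∧ (∀ k < 0, ξ k = 0) ∧ piH ξ = H) ∧
    -- ℝ-linearity
    (∀ ξ ζ : ℤ → Matrix (Fin 2) (Fin 2) ℂ, piH (ξ + ζ) = piH ξ + piH ζ) ∧
    (∀ (r : ℝ) (ξ : ℤ → Matrix (Fin 2) (Fin 2) ℂ),
      piH (fun k => (r : ℂ) • ξ k) = fun k => (r : ℂ) • piH ξ k) ∧
    -- continuity (boundedness) of the map and of its inverse
    (∃ C : ℝ, 0 < C ∧ ∀ ξ, memL ξ → Kcond α β ξ → (∀ k < 0, ξ k = 0) →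
      (∑' k, ‖piH ξ k‖) ≤ C * ∑' k, ‖ξ k‖) ∧
    (∃ C : ℝ, 0 < C ∧ ∀ ξ, memL ξ → Kcond α β ξ → (∀ k < 0, ξ k = 0) →
      (∑' k, ‖ξ k‖) ≤ C * ∑' k, ‖piH ξ k‖) := by
  have hμ := absMu_pos α hβ
  refine ⟨fun ξ hξ hK _ => ⟨memL_piH hξ, starSeq_piH ξ, kcond_piH hK⟩, ?_, ?_, piH_add,
    piH_ofReal_smul, ⟨1, one_pos, fun ξ hξ _ _ => by simpa using tsum_norm_piH_le hξ.1⟩,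
    ⟨2 + ‖β‖ / absMu α β, by positivity, ?_⟩⟩
  · intro ξ ζ hξ hKξ hsξ hζ hKζ hsζ h
    rw [← piHInv_piH hβ (hξ.2 0) hKξ hsξ, h, piHInv_piH hβ (hζ.2 0) hKζ hsζ]
  · intro H hH hHs hK
    exact ⟨piHInv α β H, memL_piHInv hH, kcond_piHInv hβ hK, fun _ => piHInv_of_neg,
      piH_piHInv hβ (hH.2 0) hHs hK⟩
  · intro ξ hξ hK hs
    calc ∑' k, ‖ξ k‖ = ∑' k, ‖piHInv α β (piH ξ) k‖ := by rw [piHInv_piH hβ (hξ.2 0) hK hs]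
      _ ≤ _ := tsum_norm_piHInv_le (summable_norm_piH hξ.1)

/-- For `α > 0` and `β ≠ 0`, the restriction of `π^H` to `K^{≥0}_𝔛` is a bijective
continuous ℝ-linear map onto `ΛH ∩ K_𝔛`, and an isomorphism of real Banach spaces
(both it and its inverse are bounded). -/
theorem stmt12 (α : ℝ) (hα : 0 < α) (β : ℂ) (hβ : β ≠ 0) :
    -- π^H maps K^{≥0}_𝔛 into ΛH ∩ K_𝔛
    (∀ ξ, memL ξ → Kcond α β ξ → (∀ k < 0, ξ k = 0) →
      memL (piH ξ) ∧ (∀ k, starSeq (piH ξ) k = -piH ξ k) ∧ Kcond α β (piH ξ)) ∧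
    -- injectivity
    (∀ ξ ζ, memL ξ → Kcond α β ξ → (∀ k < 0, ξ k = 0) →
      memL ζ → Kcond α β ζ → (∀ k < 0, ζ k = 0) → piH ξ = piH ζ → ξ = ζ) ∧
    -- surjectivity onto ΛH ∩ K_𝔛
    (∀ H, memL H → (∀ k, starSeq H k = -H k) → Kcond α β H →
      ∃ ξ, memL ξ ∧ Kcond α β ξ ∧ (∀ k < 0, ξ k = 0) ∧ piH ξ = H) ∧
    -- ℝ-linearity
    (∀ ξ ζ : ℤ → Matrix (Fin 2) (Fin 2) ℂ, piH (ξ + ζ) = piH ξ + piH ζ) ∧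
    (∀ (r : ℝ) (ξ : ℤ → Matrix (Fin 2) (Fin 2) ℂ),
      piH (fun k => (r : ℂ) • ξ k) = fun k => (r : ℂ) • piH ξ k) ∧
    -- continuity (boundedness) of the map and of its inverse
    (∃ C : ℝ, 0 < C ∧ ∀ ξ, memL ξ → Kcond α β ξ → (∀ k < 0, ξ k = 0) →
      (∑' k, ‖piH ξ k‖) ≤ C * ∑' k, ‖ξ k‖) ∧
    (∃ C : ℝ, 0 < C ∧ ∀ ξ, memL ξ → Kcond α β ξ → (∀ k < 0, ξ k = 0) →
      (∑' k, ‖ξ k‖) ≤ C * ∑' k, ‖piH ξ k‖) :=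
  stmt12_general α β hβ
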